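/- arXiv:math/0506234 — 4 statements merged into one kernel-verified Lean document; each statement's English description precedes it below -/
import Mathlib

section
/- Assume d < n. For every R > 0 there exists a constant c > 0 (depending only on B and R) such that for every P ∈ GLₙ(ℝ), setting C = P⁻¹BP, if Tr(CᵀC) ≤ R then there exists a linear subspace W ⊆ ℝⁿ with dim W = n − d such that ‖Cᵀw‖ ≥ c·‖w‖ for every w ∈ W. (Equivalently, at most d singular values of any such bounded conjugate C of B are smaller than c.) -/
open Matrix

/-- The Euclidean norm of a vector in `ℝⁿ`. -/
noncomputable def eucNorm {n : ℕ} (v : Fin n → ℝ) : ℝ :=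
  Real.sqrt (∑ i, (v i) ^ 2)

/-- `d = dim ker Bⁿ`, the algebraic multiplicity of the eigenvalue `0` of `B`. -/
noncomputable def genKerDim {n : ℕ} (B : Matrix (Fin n) (Fin n) ℝ) : ℕ :=
  Module.finrank ℝ (LinearMap.ker (Matrix.mulVecLin (B ^ n)))

/-- The conjugate `C = P⁻¹ B P` of `B` by `P ∈ GLₙ(ℝ)`. -/
def conjBy {n : ℕ} (B : Matrix (Fin n) (Fin n) ℝ) (P : (Matrix (Fin n) (Fin n) ℝ)ˣ) :
    Matrix (Fin n) (Fin n) ℝ :=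
  (↑P⁻¹ : Matrix (Fin n) (Fin n) ℝ) * B * (↑P : Matrix (Fin n) (Fin n) ℝ)

section aux

attribute [local instance] Matrix.frobeniusNormedAddCommGroup Matrix.frobeniusNormedRing
  Matrix.frobeniusNormedSpace

variable {n : ℕ}

lemma eucNorm_eq (v : Fin n → ℝ) :
    eucNorm v = ‖(WithLp.equiv 2 (Fin n → ℝ)).symm v‖ := by
  rw [EuclideanSpace.norm_eq]
  unfold eucNorm
  congr 1
  refine Finset.sum_congr rfl fun i _ => ?_
  rw [WithLp.equiv_symm_apply, WithLp.ofLp_toLp, Real.norm_eq_abs, sq_abs]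

lemma eucNorm_nonneg (v : Fin n → ℝ) : 0 ≤ eucNorm v := Real.sqrt_nonneg _

lemma eucNorm_smul (a : ℝ) (v : Fin n → ℝ) : eucNorm (a • v) = |a| * eucNorm v := by
  rw [eucNorm_eq, eucNorm_eq]
  have : (WithLp.equiv 2 (Fin n → ℝ)).symm (a • v) =
      a • (WithLp.equiv 2 (Fin n → ℝ)).symm v := rfl
  rw [this, norm_smul, Real.norm_eq_abs]

lemma eucNorm_neg (v : Fin n → ℝ) : eucNorm (-v) = eucNorm v := by
  have := eucNorm_smul (-1) v
  simpa using this

lemma eucNorm_mulVec_le (M : Matrix (Fin n) (Fin n) ℝ) (v : Fin n → ℝ) :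
    eucNorm (M.mulVec v) ≤ ‖M‖ * eucNorm v := by
  have h := Matrix.frobenius_norm_mul M (Matrix.replicateCol (Fin 1) v)
  rw [← Matrix.replicateCol_mulVec] at h
  rw [eucNorm_eq, eucNorm_eq]
  have e1 := Matrix.frobenius_norm_replicateCol (ι := Fin 1) (M *ᵥ v)
  have e2 := Matrix.frobenius_norm_replicateCol (ι := Fin 1) v
  exact (e1.symm.trans_le h).trans_eq (congrArg (‖M‖ * ·) e2)

lemma pow_conjBy (B : Matrix (Fin n) (Fin n) ℝ) (P : (Matrix (Fin n) (Fin n) ℝ)ˣ) (k : ℕ) :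
    (conjBy B P) ^ k = conjBy (B ^ k) P := by
  induction k with
  | zero =>
    simp only [pow_zero, conjBy, mul_one]
    exact (Units.inv_mul P).symm
  | succ k ih =>
    rw [pow_succ, ih, pow_succ, conjBy, conjBy, conjBy]
    have h1 : (↑P : Matrix (Fin n) (Fin n) ℝ) * (↑P⁻¹ : Matrix (Fin n) (Fin n) ℝ) = 1 :=
      Units.mul_inv P
    calc (↑P⁻¹ : Matrix (Fin n) (Fin n) ℝ) * B ^ k * ↑P * ((↑P⁻¹ : Matrix (Fin n) (Fin n) ℝ) * B * ↑P)
        = ↑P⁻¹ * B ^ k * ((↑P : Matrix (Fin n) (Fin n) ℝ) * (↑P⁻¹ : Matrix (Fin n) (Fin n) ℝ)) * (B * ↑P) := by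
          simp only [Matrix.mul_assoc]
      _ = (↑P⁻¹ : Matrix (Fin n) (Fin n) ℝ) * (B ^ k * B) * ↑P := by
          rw [h1, Matrix.mul_one]; simp only [Matrix.mul_assoc]

lemma aeval_conjBy (B : Matrix (Fin n) (Fin n) ℝ) (P : (Matrix (Fin n) (Fin n) ℝ)ˣ)
    (p : Polynomial ℝ) :
    Polynomial.aeval (conjBy B P) p = conjBy (Polynomial.aeval B p) P := by
  induction p using Polynomial.induction_on' with
  | add p q hp hq =>
    rw [map_add, map_add]
    rw [show (Polynomial.aeval (conjBy B P)) p = _ from hp,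
      show (Polynomial.aeval (conjBy B P)) q = _ from hq]
    simp only [conjBy, Matrix.mul_add, Matrix.add_mul]
  | monomial k a =>
    rw [Polynomial.aeval_monomial, Polynomial.aeval_monomial, pow_conjBy]
    simp only [conjBy, Algebra.algebraMap_eq_smul_one, smul_mul_assoc, one_mul,
      Matrix.mul_smul, Matrix.smul_mul]

lemma aeval_transpose (M : Matrix (Fin n) (Fin n) ℝ) (p : Polynomial ℝ) :
    Polynomial.aeval Mᵀ p = (Polynomial.aeval M p)ᵀ := by
  induction p using Polynomial.induction_on' with
  | add p q hp hq => simp [map_add, hp, hq, Matrix.transpose_add]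
  | monomial k a =>
    rw [Polynomial.aeval_monomial, Polynomial.aeval_monomial]
    simp only [Algebra.algebraMap_eq_smul_one, smul_mul_assoc, one_mul,
      Matrix.transpose_smul, Matrix.transpose_pow]

lemma nullity_add_rank (M : Matrix (Fin n) (Fin n) ℝ) :
    Module.finrank ℝ (LinearMap.ker M.mulVecLin) + M.rank = n := by
  have := LinearMap.finrank_range_add_finrank_ker M.mulVecLin
  rw [Matrix.rank]
  rw [Module.finrank_pi ℝ] at this
  simp only [Fintype.card_fin] at this
  omega

lemma sqrt_n_ge_one (hn : 1 ≤ n) : (1:ℝ) ≤ Real.sqrt n := by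
  rw [show (1:ℝ) = Real.sqrt 1 from (Real.sqrt_one).symm]
  exact Real.sqrt_le_sqrt (by exact_mod_cast hn)

lemma norm_one_matrix : ‖(1 : Matrix (Fin n) (Fin n) ℝ)‖ = Real.sqrt n := by
  have h : ‖(1 : Matrix (Fin n) (Fin n) ℝ)‖₊
      = NNReal.sqrt (Fintype.card (Fin n)) * ‖(1:ℝ)‖₊ := Matrix.frobenius_nnnorm_one
  have := congrArg (fun x : NNReal => (x : ℝ)) h
  simpa [Real.coe_sqrt] using this

lemma norm_pow_le_matrix (hn : 1 ≤ n) (M : Matrix (Fin n) (Fin n) ℝ) {S : ℝ} (hS : 0 ≤ S)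
    (hM : ‖M‖ ≤ S) (k : ℕ) : ‖M ^ k‖ ≤ Real.sqrt n * (1 + S) ^ k := by
  rcases Nat.eq_zero_or_pos k with rfl | hk
  · rw [pow_zero, pow_zero, mul_one, norm_one_matrix]
  · calc ‖M ^ k‖ ≤ ‖M‖ ^ k := norm_pow_le' M hk
      _ ≤ S ^ k := pow_le_pow_left₀ (norm_nonneg M) hM k
      _ ≤ (1 + S) ^ k := pow_le_pow_left₀ hS (by linarith) k
      _ ≤ Real.sqrt n * (1 + S) ^ k :=
          le_mul_of_one_le_left (pow_nonneg (by linarith) k) (sqrt_n_ge_one hn)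

lemma frob_le_sqrt_trace (C : Matrix (Fin n) (Fin n) ℝ) {R : ℝ} (hR : 0 ≤ R)
    (h : Matrix.trace (Cᵀ * C) ≤ R) : ‖C‖ ≤ Real.sqrt R := by
  rw [Matrix.frobenius_norm_def]
  have habs : ∀ x : ℝ, ‖x‖ ^ (2:ℝ) = x ^ 2 := fun x => by
    rw [Real.rpow_two, Real.norm_eq_abs, sq_abs]
  have htr : Matrix.trace (Cᵀ * C) = ∑ i, ∑ j, ‖C i j‖ ^ (2:ℝ) := by
    simp_rw [habs, Matrix.trace, Matrix.diag, Matrix.mul_apply, Matrix.transpose_apply, ← sq]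
    exact Finset.sum_comm
  rw [Real.sqrt_eq_rpow]
  apply Real.rpow_le_rpow
  · apply Finset.sum_nonneg
    intro i _
    apply Finset.sum_nonneg
    intro j _
    exact Real.rpow_nonneg (norm_nonneg _) _
  · rw [← htr]; exact h
  · norm_num

end aux

section main

attribute [local instance] Matrix.frobeniusNormedAddCommGroup Matrix.frobeniusNormedRing
  Matrix.frobeniusNormedSpace

/-- Assume `d < n`. For every `R > 0` there is `c > 0` (depending only on `B` and `R`) such
that for every `P ∈ GLₙ(ℝ)`, if `C = P⁻¹BP` satisfies `Tr(CᵀC) ≤ R`, then there is a subspace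
`W ⊆ ℝⁿ` of dimension `n − d` on which `‖Cᵀw‖ ≥ c‖w‖`. -/
theorem stmt6 {n : ℕ} (B : Matrix (Fin n) (Fin n) ℝ) (hd : genKerDim B < n) :
    ∀ R : ℝ, 0 < R → ∃ c : ℝ, 0 < c ∧
      ∀ P : (Matrix (Fin n) (Fin n) ℝ)ˣ,
        Matrix.trace ((conjBy B P)ᵀ * conjBy B P) ≤ R →
        ∃ W : Submodule ℝ (Fin n → ℝ),
          Module.finrank ℝ W = n - genKerDim B ∧
          ∀ w ∈ W, c * eucNorm w ≤ eucNorm (((conjBy B P)ᵀ).mulVec w) := by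
  intro R hR
  classical
  have hn : 1 ≤ n := Nat.lt_of_le_of_lt (Nat.zero_le _) hd
  set p := B.charpoly with hp
  have hp0 : p ≠ 0 := (Matrix.charpoly_monic B).ne_zero
  have hpdeg : p.natDegree = n := by
    rw [hp, Matrix.charpoly_natDegree_eq_dim, Fintype.card_fin]
  set m := p.natTrailingDegree with hm
  have hmn : m ≤ n := hpdeg ▸ Polynomial.natTrailingDegree_le_natDegree p
  obtain ⟨q, hq⟩ : Polynomial.X ^ m ∣ p :=
    Polynomial.X_pow_dvd_iff.mpr fun d hd' =>
      Polynomial.coeff_eq_zero_of_lt_natTrailingDegree hd'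
  set a := q.coeff 0 with ha'
  have hpm : p.coeff m = a := by
    rw [hq]
    simpa using Polynomial.coeff_X_pow_mul q m 0
  have ha : a ≠ 0 := by
    intro h0
    apply hp0
    rw [← Polynomial.trailingCoeff_eq_zero]
    have : p.trailingCoeff = p.coeff m := rfl
    rw [this, hpm, h0]
  set r := q.divX with hr
  have hqr : q = r * Polynomial.X + Polynomial.C a := by
    rw [mul_comm]
    exact (Polynomial.X_mul_divX_add q).symm
  set K := Real.sqrt n * ∑ k ∈ Finset.range (r.natDegree + 1),
      |r.coeff k| * (1 + Real.sqrt R) ^ k with hK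
  have hK0 : 0 ≤ K := by
    apply mul_nonneg (Real.sqrt_nonneg _)
    apply Finset.sum_nonneg
    intro k _
    exact mul_nonneg (abs_nonneg _) (pow_nonneg (by positivity) k)
  have h1K : 0 < 1 + K := by linarith
  refine ⟨|a| / (1 + K), div_pos (abs_pos.mpr ha) h1K, ?_⟩
  intro P hP
  set D := (conjBy B P)ᵀ with hD
  have hDnorm : ‖D‖ ≤ Real.sqrt R := by
    rw [hD, Matrix.frobenius_norm_transpose]
    exact frob_le_sqrt_trace _ hR.le hP
  have hCH : Polynomial.aeval D p = 0 := by
    rw [hD, aeval_transpose, aeval_conjBy, hp, Matrix.aeval_self_charpoly]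
    simp [conjBy]
  set Q := Polynomial.aeval D q with hQdef
  set Rm := Polynomial.aeval D r with hRmdef
  have hDQ : D ^ n * Q = 0 := by
    have h1 : D ^ m * Q = 0 := by
      have h2 := hCH
      rw [hq, _root_.map_mul, map_pow, Polynomial.aeval_X] at h2
      exact h2
    calc D ^ n * Q = D ^ (n - m) * (D ^ m * Q) := by
          rw [← mul_assoc, ← pow_add]
          congr 2
          omega
      _ = 0 := by rw [h1, mul_zero]
  have hQeq : Q = Rm * D + a • 1 := by
    rw [hQdef]
    conv_lhs => rw [hqr]
    rw [map_add, _root_.map_mul, Polynomial.aeval_X, Polynomial.aeval_C,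
      Algebra.algebraMap_eq_smul_one]
  set W := LinearMap.ker Q.mulVecLin with hW
  have hmem : ∀ w, w ∈ W ↔ Q.mulVec w = 0 := fun w => by
    rw [hW, LinearMap.mem_ker, Matrix.mulVecLin_apply]
  have hkey : ∀ w ∈ W, (Rm * D).mulVec w = -(a • w) := by
    intro w hw
    have h0 : Q.mulVec w = 0 := (hmem w).mp hw
    rw [hQeq, Matrix.add_mulVec, Matrix.smul_mulVec, Matrix.one_mulVec] at h0
    exact eq_neg_of_add_eq_zero_left h0
  have hcomm : Commute Rm D := by
    have h3 : Polynomial.aeval D (r * Polynomial.X)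
        = Polynomial.aeval D (Polynomial.X * r) := by rw [mul_comm]
    rw [_root_.map_mul, _root_.map_mul, Polynomial.aeval_X] at h3
    exact h3
  have hdisj : ∀ w, w ∈ W → (D ^ n).mulVec w = 0 → w = 0 := by
    intro w hw hwn
    have hiter : ∀ k : ℕ, ((Rm * D) ^ k).mulVec w = (-a) ^ k • w := by
      intro k
      induction k with
      | zero => simp [Matrix.one_mulVec]
      | succ k ih =>
        have e1 : ((Rm * D) ^ (k+1)).mulVec w
            = ((Rm * D) ^ k).mulVec ((Rm * D).mulVec w) := by
          rw [Matrix.mulVec_mulVec, ← pow_succ]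
        rw [e1, hkey w hw]
        have e2 : ((Rm * D) ^ k).mulVec (-(a • w))
            = -(a • ((Rm * D) ^ k).mulVec w) := by
          have := map_neg ((Rm * D) ^ k).mulVecLin (a • w)
          have h4 := map_smul ((Rm * D) ^ k).mulVecLin a w
          simp only [Matrix.mulVecLin_apply] at this h4
          rw [this, h4]
        rw [e2, ih, smul_smul, pow_succ']
        rw [← neg_smul]
        congr 1
        ring
    have h1 : ((Rm * D) ^ n).mulVec w = 0 := by
      rw [hcomm.mul_pow, ← Matrix.mulVec_mulVec, hwn, Matrix.mulVec_zero]
    rw [hiter n] at h1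
    have hne : (-a) ^ n ≠ 0 := pow_ne_zero _ (neg_ne_zero.mpr ha)
    exact (smul_eq_zero.mp h1).resolve_left hne
  -- dimension count
  have hfr : Module.finrank ℝ (Fin n → ℝ) = n := by
    simp [Module.finrank_pi]
  have hKer : Module.finrank ℝ (LinearMap.ker (D ^ n).mulVecLin) = genKerDim B := by
    have hDn : D ^ n = (conjBy (B ^ n) P)ᵀ := by
      rw [hD, ← Matrix.transpose_pow, pow_conjBy]
    have hrk : (D ^ n).rank = (B ^ n).rank := by
      rw [hDn, Matrix.rank_transpose]
      unfold conjBy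
      rw [Matrix.rank_mul_eq_left_of_isUnit_det (↑P : Matrix (Fin n) (Fin n) ℝ) _
        ((Matrix.isUnit_iff_isUnit_det _).mp P.isUnit),
        Matrix.rank_mul_eq_right_of_isUnit_det (↑P⁻¹ : Matrix (Fin n) (Fin n) ℝ) _
        ((Matrix.isUnit_iff_isUnit_det _).mp P⁻¹.isUnit)]
    have h1 := nullity_add_rank (D ^ n)
    have h2 := nullity_add_rank (B ^ n)
    have hg : genKerDim B = Module.finrank ℝ (LinearMap.ker (B ^ n).mulVecLin) := rfl
    omega
  have hrankQ : Q.rank ≤ genKerDim B := by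
    have hsub : LinearMap.range Q.mulVecLin ≤ LinearMap.ker (D ^ n).mulVecLin := by
      rw [LinearMap.range_le_ker_iff, ← Matrix.mulVecLin_mul, hDQ, Matrix.mulVecLin_zero]
    calc Q.rank = Module.finrank ℝ (LinearMap.range Q.mulVecLin) := rfl
      _ ≤ Module.finrank ℝ (LinearMap.ker (D ^ n).mulVecLin) :=
          Submodule.finrank_mono hsub
      _ = genKerDim B := hKer
  have h1 : Module.finrank ℝ W + Q.rank = n := nullity_add_rank Q
  have hWle : Module.finrank ℝ W + genKerDim B ≤ n := by
    have hbot : W ⊓ LinearMap.ker (D ^ n).mulVecLin = ⊥ := by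
      rw [Submodule.eq_bot_iff]
      intro w hw
      exact hdisj w hw.1 (by simpa [Matrix.mulVecLin_apply] using hw.2)
    have hsup := Submodule.finrank_sup_add_finrank_inf_eq W
      (LinearMap.ker (D ^ n).mulVecLin)
    rw [hbot] at hsup
    have hle := Submodule.finrank_le (W ⊔ LinearMap.ker (D ^ n).mulVecLin)
    rw [hfr] at hle
    have hb0 : Module.finrank ℝ (⊥ : Submodule ℝ (Fin n → ℝ)) = 0 := finrank_bot ℝ _
    omega
  have hWrank : Module.finrank ℝ W = n - genKerDim B := by omega
  refine ⟨W, hWrank, ?_⟩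
  -- norm estimate
  have hRmnorm : ‖Rm‖ ≤ K := by
    rw [hRmdef, Polynomial.aeval_eq_sum_range]
    calc ‖∑ k ∈ Finset.range (r.natDegree + 1), r.coeff k • D ^ k‖
        ≤ ∑ k ∈ Finset.range (r.natDegree + 1), ‖r.coeff k • D ^ k‖ := norm_sum_le _ _
      _ ≤ ∑ k ∈ Finset.range (r.natDegree + 1),
            |r.coeff k| * (Real.sqrt n * (1 + Real.sqrt R) ^ k) := by
          apply Finset.sum_le_sum
          intro k _
          rw [norm_smul, Real.norm_eq_abs]
          exact mul_le_mul_of_nonneg_left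
            (norm_pow_le_matrix hn D (Real.sqrt_nonneg R) hDnorm k) (abs_nonneg _)
      _ = K := by
          rw [hK, Finset.mul_sum]
          apply Finset.sum_congr rfl
          intro k _
          ring
  intro w hw
  have hid : a • w = -(Rm.mulVec (D.mulVec w)) := by
    have h5 := hkey w hw
    rw [← Matrix.mulVec_mulVec] at h5
    rw [h5, neg_neg]
  have h2 : |a| * eucNorm w ≤ K * eucNorm (D.mulVec w) := by
    calc |a| * eucNorm w = eucNorm (a • w) := (eucNorm_smul a w).symm
      _ = eucNorm (Rm.mulVec (D.mulVec w)) := by rw [hid, eucNorm_neg]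
      _ ≤ ‖Rm‖ * eucNorm (D.mulVec w) := eucNorm_mulVec_le _ _
      _ ≤ K * eucNorm (D.mulVec w) :=
          mul_le_mul_of_nonneg_right hRmnorm (eucNorm_nonneg _)
  rw [div_mul_eq_mul_div, div_le_iff₀ h1K]
  nlinarith [eucNorm_nonneg (D.mulVec w), eucNorm_nonneg w]

end main
end

section
/- For every integer k with 0 ≤ k ≤ d − d', there exist R > 0, a sequence (P_j)_{j∈ℕ} in GLₙ(ℝ), and a matrix C₀ ∈ Mₙ(ℝ) such that the conjugates C_j = P_j⁻¹ B P_j satisfy Tr(C_jᵀ C_j) ≤ R for all j, C_j converges to C₀ as j → ∞, and dim ker C₀ = d' + k. (Geometrically: there is an effondrement of the suspension M with uniformly bounded curvature producing exactly k small nonzero eigenvalues of the Laplacian on invariant 1-forms.) -/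
open Matrix

/-- `d' = dim ker B`. -/
noncomputable def kerDim {n : ℕ} (B : Matrix (Fin n) (Fin n) ℝ) : ℕ :=
  Module.finrank ℝ (LinearMap.ker (Matrix.mulVecLin B))

open Filter

namespace Stmt7Aux

variable {n : ℕ}

lemma mulVecLin_pow (B : Matrix (Fin n) (Fin n) ℝ) (m : ℕ) :
    (B ^ m).mulVecLin = (B.mulVecLin) ^ m := by
  induction m with
  | zero => simp [Matrix.mulVecLin_one]; rfl
  | succ m ih => rw [pow_succ, Matrix.mulVecLin_mul, ih, pow_succ]; rfl

def Degen (B C : Matrix (Fin n) (Fin n) ℝ) : Prop :=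
  C ∈ closure (Set.range (conjBy B))

lemma conjBy_one (B : Matrix (Fin n) (Fin n) ℝ) : conjBy B 1 = B := by
  simp [conjBy]

lemma conjBy_mul (B : Matrix (Fin n) (Fin n) ℝ) (P Q : (Matrix (Fin n) (Fin n) ℝ)ˣ) :
    conjBy B (P * Q) = conjBy (conjBy B P) Q := by
  simp [conjBy, _root_.mul_inv_rev, Units.val_mul, Matrix.mul_assoc]

lemma degen_self (B : Matrix (Fin n) (Fin n) ℝ) : Degen B B :=
  subset_closure ⟨1, conjBy_one B⟩

lemma degen_trans {B C C' : Matrix (Fin n) (Fin n) ℝ} (h1 : Degen B C) (h2 : Degen C C') :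
    Degen B C' := by
  have hsub : Set.range (conjBy C) ⊆ closure (Set.range (conjBy B)) := by
    rintro X ⟨Q, rfl⟩
    have cont : Continuous fun M : Matrix (Fin n) (Fin n) ℝ =>
        (↑Q⁻¹ : Matrix (Fin n) (Fin n) ℝ) * M * (↑Q : Matrix (Fin n) (Fin n) ℝ) :=
      (continuous_const.matrix_mul continuous_id).matrix_mul continuous_const
    have maps : Set.MapsTo (fun M : Matrix (Fin n) (Fin n) ℝ =>
        (↑Q⁻¹ : Matrix (Fin n) (Fin n) ℝ) * M * (↑Q : Matrix (Fin n) (Fin n) ℝ))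
        (Set.range (conjBy B)) (Set.range (conjBy B)) := by
      rintro M ⟨P, rfl⟩
      exact ⟨P * Q, by rw [conjBy_mul]; rfl⟩
    exact maps.closure cont h1
  exact closure_minimal hsub isClosed_closure h2



lemma step (B : Matrix (Fin n) (Fin n) ℝ) (hlt : kerDim B < genKerDim B) :
    ∃ C, Degen B C ∧ kerDim C = kerDim B + 1 ∧ genKerDim C = genKerDim B := by
  classical
  set f := B.mulVecLin with hf
  have hfn : (B ^ n).mulVecLin = f ^ n := mulVecLin_pow B n
  have hgle : genKerDim B ≤ n := by
    unfold genKerDim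
    calc Module.finrank ℝ (LinearMap.ker ((B ^ n).mulVecLin))
        ≤ Module.finrank ℝ (Fin n → ℝ) := Submodule.finrank_le _
      _ = n := Module.finrank_fin_fun ℝ
  have hn : 1 ≤ n := by omega
  have hstab : LinearMap.ker (f ^ (n+1)) = LinearMap.ker (f ^ n) := by
    have e1 := Module.End.ker_pow_eq_ker_pow_finrank_of_le (K := ℝ) (f := f) (m := n+1)
      (by rw [Module.finrank_fin_fun]; omega)
    have e2 := Module.End.ker_pow_eq_ker_pow_finrank_of_le (K := ℝ) (f := f) (m := n)
      (by rw [Module.finrank_fin_fun])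
    rw [e1, e2]
  -- find u with f² u = 0, f u ≠ 0
  have hne : ¬ (LinearMap.ker (f ^ 2) ≤ LinearMap.ker f) := by
    intro hle
    have heq : LinearMap.ker (f ^ 1) = LinearMap.ker (f ^ (1+1)) := by
      refine le_antisymm ?_ (by rw [pow_one]; exact hle)
      intro x hx
      rw [LinearMap.mem_ker, pow_one] at hx
      rw [LinearMap.mem_ker, pow_succ, Module.End.mul_apply, pow_one, hx, map_zero]
    have hall := Module.End.ker_pow_constant heq (n - 1)
    have h1n : 1 + (n - 1) = n := by omega
    rw [h1n, pow_one] at hall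
    have : kerDim B = genKerDim B := by
      unfold kerDim genKerDim
      rw [hfn, ← hall]
    omega
  obtain ⟨u, hu2, hu1⟩ := SetLike.not_le_iff_exists.mp hne
  rw [LinearMap.mem_ker] at hu2
  set w := f u with hwdef
  have hu1' : w ≠ 0 := by
    intro h; exact hu1 (LinearMap.mem_ker.mpr h)
  have hw0 : f w = 0 := by
    rw [hwdef, ← Module.End.mul_apply, ← pow_two, hu2]
  have hww : w ⬝ᵥ w ≠ 0 := by rwa [Ne, dotProduct_self_eq_zero]
  set l : Fin n → ℝ := (w ⬝ᵥ w)⁻¹ • w with hldef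
  have hl : l ⬝ᵥ w = 1 := by
    rw [hldef, smul_dotProduct, smul_eq_mul, inv_mul_cancel₀ hww]
  have hBw : B *ᵥ w = 0 := hw0
  set W := vecMulVec w l with hWdef
  set E := vecMulVec w (l ᵥ* B) with hEdef
  have hWW : W * W = W := by
    ext i j
    simp only [hWdef, Matrix.mul_apply, vecMulVec_apply]
    rw [Finset.sum_congr rfl (fun k _ => by ring :
      ∀ k ∈ Finset.univ, w i * l k * (w k * l j) = (l k * w k) * (w i * l j))]
    rw [← Finset.sum_mul]
    have : ∑ k, l k * w k = l ⬝ᵥ w := rfl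
    rw [this, hl, one_mul]
  have hBW : B * W = 0 := by
    ext i j
    simp only [hWdef, Matrix.mul_apply, vecMulVec_apply, Matrix.zero_apply]
    rw [Finset.sum_congr rfl (fun k _ => by ring :
      ∀ k ∈ Finset.univ, B i k * (w k * l j) = (B i k * w k) * l j)]
    rw [← Finset.sum_mul]
    have : ∑ k, B i k * w k = (B *ᵥ w) i := rfl
    rw [this, hBw]
    simp
  have hWB : W * B = E := by
    ext i j
    simp only [hWdef, hEdef, Matrix.mul_apply, vecMulVec_apply]
    rw [Finset.sum_congr rfl (fun k _ => mul_assoc _ _ _ :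
      ∀ k ∈ Finset.univ, w i * l k * B k j = w i * (l k * B k j))]
    rw [← Finset.mul_sum]
    rfl
  have hEW : E * W = 0 := by
    rw [← hWB, Matrix.mul_assoc, hBW, Matrix.mul_zero]
  set C := B - E with hCdef
  have hEx : ∀ x, E *ᵥ x = (l ⬝ᵥ (B *ᵥ x)) • w := by
    intro x
    have h1 : (l ᵥ* B) ⬝ᵥ x = l ⬝ᵥ (B *ᵥ x) := (Matrix.dotProduct_mulVec l B x).symm
    ext i
    have h2 : (E *ᵥ x) i = ∑ k, (w i * (l ᵥ* B) k) * x k := by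
      simp [Matrix.mulVec, dotProduct, hEdef, vecMulVec_apply]
    rw [h2, Finset.sum_congr rfl (fun k _ => mul_assoc _ _ _ :
      ∀ k ∈ Finset.univ, (w i * (l ᵥ* B) k) * x k = w i * ((l ᵥ* B) k * x k)),
      ← Finset.mul_sum]
    rw [show ∑ k, (l ᵥ* B) k * x k = (l ᵥ* B) ⬝ᵥ x from rfl, h1]
    simp [mul_comm]
  have hgapp : ∀ x, C.mulVecLin x = f x - (l ⬝ᵥ f x) • w := by
    intro x
    show (B - E) *ᵥ x = _
    rw [Matrix.sub_mulVec, hEx x]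
    rfl
  refine ⟨C, ?_, ?_, ?_⟩
  · -- Degen B C
    have hmul : ∀ a b : ℝ, a + b + a * b = 0 →
        (1 + a • W) * (1 + b • W) = 1 := by
      intro a b hab
      have : (1 + a • W) * (1 + b • W) = 1 + (a + b + a * b) • W := by
        simp only [mul_add, add_mul, mul_one, one_mul, Matrix.smul_mul, Matrix.mul_smul,
          smul_smul, hWW]
        module
      rw [this, hab, zero_smul, add_zero]
    have habj : ∀ j : ℕ, (j : ℝ) + (1/(j+1) - 1) + (j : ℝ) * (1/(j+1) - 1) = 0 := by
      intro j
      have : (j : ℝ) + 1 ≠ 0 := by positivity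
      field_simp
      ring
    set P : ℕ → (Matrix (Fin n) (Fin n) ℝ)ˣ := fun j =>
      ⟨1 + (j : ℝ) • W, 1 + (1/((j:ℝ)+1) - 1) • W,
        hmul _ _ (habj j), hmul _ _ (by linear_combination habj j)⟩ with hPdef
    have hconj : ∀ j : ℕ, conjBy B (P j) = B + (1/((j:ℝ)+1) - 1) • E := by
      intro j
      show (1 + (1/((j:ℝ)+1) - 1) • W) * B * (1 + (j : ℝ) • W) = _
      simp only [mul_add, add_mul, one_mul, mul_one, Matrix.smul_mul, Matrix.mul_smul,
        hWB, hBW, hEW, smul_zero, add_zero, zero_add, Matrix.mul_zero, Matrix.zero_mul,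
        smul_smul]
    have hC : C = B + (-1 : ℝ) • E := by rw [hCdef]; module
    have htend : Tendsto (fun j : ℕ => conjBy B (P j)) atTop (nhds C) := by
      have h1 : Tendsto (fun j : ℕ => (1/((j:ℝ)+1) - 1)) atTop (nhds (0 - 1)) :=
        tendsto_one_div_add_atTop_nhds_zero_nat.sub_const 1
      have h2 : Tendsto (fun j : ℕ => B + (1/((j:ℝ)+1) - 1) • E) atTop
          (nhds (B + (0 - 1 : ℝ) • E)) :=
        (h1.smul_const E).const_add B
      rw [show ((0:ℝ) - 1) = (-1 : ℝ) by ring, ← hC] at h2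
      exact h2.congr (fun j => (hconj j).symm)
    exact mem_closure_of_tendsto htend (Filter.Eventually.of_forall fun j => Set.mem_range_self _)
  · -- kerDim C = kerDim B + 1
    have hkerg : LinearMap.ker C.mulVecLin = Submodule.comap f (Submodule.span ℝ {w}) := by
      ext x
      rw [LinearMap.mem_ker, Submodule.mem_comap, Submodule.mem_span_singleton]
      constructor
      · intro hx
        refine ⟨l ⬝ᵥ f x, ?_⟩
        have h := hgapp x
        rw [hx] at h
        exact (sub_eq_zero.mp h.symm).symm
      · rintro ⟨c, hc⟩
        rw [hgapp x, ← hc, dotProduct_smul, smul_eq_mul, hl, mul_one, sub_self]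
    set S := Submodule.comap f (Submodule.span ℝ {w}) with hSdef
    have hle2 : LinearMap.ker f ≤ S := by
      intro x hx
      rw [LinearMap.mem_ker] at hx
      rw [hSdef, Submodule.mem_comap, hx]
      exact Submodule.zero_mem _
    set llin : (Fin n → ℝ) →ₗ[ℝ] ℝ :=
      { toFun := fun x => l ⬝ᵥ x
        map_add' := fun x y => dotProduct_add l x y
        map_smul' := fun c x => dotProduct_smul c l x } with hllin
    set φ : S →ₗ[ℝ] ℝ := llin ∘ₗ (f ∘ₗ S.subtype) with hφ
    have hφapp : ∀ x : S, φ x = l ⬝ᵥ f (x : Fin n → ℝ) := fun x => rfl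
    have hkerφ : LinearMap.ker φ = Submodule.comap S.subtype (LinearMap.ker f) := by
      ext x
      rw [LinearMap.mem_ker, Submodule.mem_comap, LinearMap.mem_ker]
      constructor
      · intro h
        obtain ⟨c, hc⟩ := Submodule.mem_span_singleton.mp (Submodule.mem_comap.mp x.2)
        rw [hφapp, ← hc, dotProduct_smul, smul_eq_mul, hl, mul_one] at h
        show f (x : Fin n → ℝ) = 0
        rw [← hc, h, zero_smul]
      · intro h
        rw [hφapp, show f (x : Fin n → ℝ) = 0 from h, dotProduct_zero]
    have hu_mem : u ∈ S := by
      rw [hSdef, Submodule.mem_comap]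
      exact Submodule.mem_span_singleton.mpr ⟨1, by simp [hwdef]⟩
    have hrange : LinearMap.range φ = ⊤ := by
      rw [LinearMap.range_eq_top]
      intro c
      refine ⟨⟨c • u, Submodule.smul_mem S c hu_mem⟩, ?_⟩
      rw [hφapp]
      show l ⬝ᵥ f (c • u) = c
      rw [_root_.map_smul]
      rw [show f u = w from hwdef.symm, dotProduct_smul, smul_eq_mul, hl, mul_one]
    have hrank := LinearMap.finrank_range_add_finrank_ker φ
    rw [hrange, finrank_top, Module.finrank_self] at hrank
    have hkf : Module.finrank ℝ (LinearMap.ker φ) = Module.finrank ℝ (LinearMap.ker f) := by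
      rw [hkerφ]
      exact LinearEquiv.finrank_eq (Submodule.comapSubtypeEquivOfLe hle2)
    have hkB : kerDim B = Module.finrank ℝ (LinearMap.ker f) := by
      unfold kerDim; rw [← hf]
    have hkC : kerDim C = Module.finrank ℝ S := by
      unfold kerDim; rw [hkerg]
    omega
  · -- genKerDim C = genKerDim B
    have hgw : C.mulVecLin w = 0 := by
      rw [hgapp w, hw0, dotProduct_zero, zero_smul, sub_zero]
    have hgpow : ∀ m, 1 ≤ m → ∀ x,
        (C.mulVecLin ^ m) x = (f ^ m) x - (l ⬝ᵥ ((f ^ m) x)) • w := by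
      intro m hm
      induction m, hm using Nat.le_induction with
      | base => intro x; rw [pow_one, pow_one]; exact hgapp x
      | succ m hm ih =>
        intro x
        rw [pow_succ', Module.End.mul_apply, ih x, map_sub, _root_.map_smul, hgw, smul_zero, sub_zero,
          hgapp ((f ^ m) x), ← Module.End.mul_apply f (f ^ m), ← pow_succ']
    have hkerpow : LinearMap.ker (C.mulVecLin ^ n) = LinearMap.ker (f ^ n) := by
      ext x
      rw [LinearMap.mem_ker, LinearMap.mem_ker]
      constructor
      · intro hx
        have hx' := hgpow n hn x
        rw [hx] at hx'
        have hfx : (f ^ n) x = (l ⬝ᵥ (f ^ n) x) • w := sub_eq_zero.mp hx'.symm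
        set s := l ⬝ᵥ (f ^ n) x with hs
        by_cases hs0 : s = 0
        · rw [hfx, hs0, zero_smul]
        · exfalso
          have hw_in : (f ^ n) (s⁻¹ • x) = w := by
            rw [_root_.map_smul, hfx, smul_smul, inv_mul_cancel₀ hs0, one_smul]
          have h2 : (f ^ (n+1)) (s⁻¹ • x) = 0 := by
            rw [pow_succ', Module.End.mul_apply, hw_in, hw0]
          have h3 : s⁻¹ • x ∈ LinearMap.ker (f ^ n) := hstab ▸ LinearMap.mem_ker.mpr h2
          exact hu1' (by rw [← hw_in]; exact LinearMap.mem_ker.mp h3)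
      · intro hx
        rw [hgpow n hn x, hx, dotProduct_zero, zero_smul, sub_zero]
    unfold genKerDim
    rw [mulVecLin_pow, mulVecLin_pow, ← hf, hkerpow]



lemma main (k : ℕ) : ∀ B : Matrix (Fin n) (Fin n) ℝ, k ≤ genKerDim B - kerDim B →
    ∃ C, Degen B C ∧ kerDim C = kerDim B + k ∧ genKerDim C = genKerDim B := by
  induction k with
  | zero => exact fun B _ => ⟨B, degen_self B, by simp, rfl⟩
  | succ k ih =>
    intro B hk
    have hlt : kerDim B < genKerDim B := by omega
    obtain ⟨C₁, hd1, hk1, hg1⟩ := step B hlt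
    obtain ⟨C, hd2, hk2, hg2⟩ := ih C₁ (by omega)
    exact ⟨C, degen_trans hd1 hd2, by omega, by omega⟩

end Stmt7Aux

theorem stmt7' {n : ℕ} (B : Matrix (Fin n) (Fin n) ℝ) (k : ℕ)
    (hk : k ≤ genKerDim B - kerDim B) :
    ∃ R : ℝ, 0 < R ∧
      ∃ (P : ℕ → (Matrix (Fin n) (Fin n) ℝ)ˣ) (C₀ : Matrix (Fin n) (Fin n) ℝ),
        (∀ j, Matrix.trace ((conjBy B (P j))ᵀ * conjBy B (P j)) ≤ R) ∧
        Filter.Tendsto (fun j => conjBy B (P j)) Filter.atTop (nhds C₀) ∧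
        Module.finrank ℝ (LinearMap.ker (Matrix.mulVecLin C₀)) = kerDim B + k := by
  obtain ⟨C₀, hdeg, hker, -⟩ := Stmt7Aux.main k B hk
  haveI : FrechetUrysohnSpace (Matrix (Fin n) (Fin n) ℝ) :=
    inferInstanceAs (FrechetUrysohnSpace (Fin n → Fin n → ℝ))
  obtain ⟨x, hxmem, hxlim⟩ := mem_closure_iff_seq_limit.mp hdeg
  choose P hP using hxmem
  have hfun : (fun j => conjBy B (P j)) = x := funext hP
  have hcont : Continuous fun M : Matrix (Fin n) (Fin n) ℝ => Matrix.trace (Mᵀ * M) :=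
    ((continuous_id.matrix_transpose).matrix_mul continuous_id).matrix_trace
  have htr : Filter.Tendsto (fun j => Matrix.trace ((x j)ᵀ * (x j))) Filter.atTop
      (nhds (Matrix.trace (C₀ᵀ * C₀))) := (hcont.tendsto C₀).comp hxlim
  obtain ⟨b, hb⟩ := htr.bddAbove_range
  refine ⟨max b 1, lt_of_lt_of_le one_pos (le_max_right b 1), P, C₀, ?_, ?_, hker⟩
  · intro j
    rw [hP j]
    exact le_trans (hb (Set.mem_range_self j)) (le_max_left b 1)
  · rw [hfun]; exact hxlim

/-- For every `0 ≤ k ≤ d − d'` there are `R > 0`, a sequence `P_j ∈ GLₙ(ℝ)` and a matrix `C₀`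
such that the conjugates `C_j = P_j⁻¹ B P_j` satisfy `Tr(C_jᵀ C_j) ≤ R`, converge to `C₀`,
and `dim ker C₀ = d' + k`. -/
theorem stmt7 {n : ℕ} (B : Matrix (Fin n) (Fin n) ℝ) (k : ℕ)
    (hk : k ≤ genKerDim B - kerDim B) :
    ∃ R : ℝ, 0 < R ∧
      ∃ (P : ℕ → (Matrix (Fin n) (Fin n) ℝ)ˣ) (C₀ : Matrix (Fin n) (Fin n) ℝ),
        (∀ j, Matrix.trace ((conjBy B (P j))ᵀ * conjBy B (P j)) ≤ R) ∧
        Filter.Tendsto (fun j => conjBy B (P j)) Filter.atTop (nhds C₀) ∧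
        Module.finrank ℝ (LinearMap.ker (Matrix.mulVecLin C₀)) = kerDim B + k :=
  stmt7' B k hk
end

section
/- The following are equivalent: (i) d ≠ d' (i.e. the Jordan reduction of B has a nontrivial nilpotent block); (ii) there exists a sequence (P_j)_{j∈ℕ} in GLₙ(ℝ) such that the conjugates C_j = P_j⁻¹ B P_j are uniformly bounded in norm and converge to a matrix C₀ with rank C₀ < rank B. -/
open Matrix

section helpers

variable {N : ℕ}

private lemma mulVecLin_pow (B : Matrix (Fin N) (Fin N) ℝ) (k : ℕ) :
    (B ^ k).mulVecLin = B.mulVecLin ^ k := by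
  induction k with
  | zero => simp [Module.End.one_eq_id]
  | succ k ih => rw [pow_succ, pow_succ, Matrix.mulVecLin_mul, ih, Module.End.mul_eq_comp]

private lemma eval_charpoly' (M : Matrix (Fin N) (Fin N) ℝ) (s : ℝ) :
    M.charpoly.eval s = (s • (1 : Matrix (Fin N) (Fin N) ℝ) - M).det := by
  rw [Matrix.charpoly, ← Polynomial.coe_evalRingHom, RingHom.map_det]
  congr 1
  ext i j
  by_cases h : i = j <;>
    simp [Matrix.charmatrix_apply, h, Matrix.one_apply, Matrix.smul_apply, Matrix.sub_apply]

private lemma charpoly_mulVecLin (M : Matrix (Fin N) (Fin N) ℝ) :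
    LinearMap.charpoly M.mulVecLin = M.charpoly := by
  rw [← LinearMap.charpoly_toMatrix M.mulVecLin (Pi.basisFun ℝ (Fin N))]
  congr 1
  rw [LinearMap.toMatrix_eq_toMatrix']
  have : Matrix.toLin' M = M.mulVecLin := rfl
  rw [← this, LinearMap.toMatrix'_toLin']

private lemma genKerDim_eq_trailing (M : Matrix (Fin N) (Fin N) ℝ) :
    genKerDim M = (M.charpoly).natTrailingDegree := by
  have h1 := Module.End.maxGenEigenspace_eq_genEigenspace_finrank (M.mulVecLin) (0 : ℝ)
  rw [Module.finrank_fin_fun] at h1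
  have hsub : LinearMap.ker ((M ^ N).mulVecLin) =
      Module.End.maxGenEigenspace M.mulVecLin 0 := by
    rw [h1, Module.End.genEigenspace_nat, mulVecLin_pow]
    simp
  unfold genKerDim
  rw [hsub, LinearMap.finrank_maxGenEigenspace_zero_eq, charpoly_mulVecLin]

private lemma rank_add_kerDim (M : Matrix (Fin N) (Fin N) ℝ) : M.rank + kerDim M = N := by
  unfold kerDim
  rw [Matrix.rank]
  have := LinearMap.finrank_range_add_finrank_ker M.mulVecLin
  simpa using this

end helpers

section helpers2
variable {N : ℕ}

private lemma kerDim_le_genKerDim (M : Matrix (Fin N) (Fin N) ℝ) : kerDim M ≤ genKerDim M := by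
  rcases N with _ | m
  · unfold kerDim
    have h := Submodule.finrank_le (LinearMap.ker M.mulVecLin)
    simp only [Module.finrank_fin_fun] at h
    omega
  · unfold kerDim genKerDim
    apply Submodule.finrank_mono
    intro x hx
    rw [LinearMap.mem_ker] at hx ⊢
    rw [Matrix.mulVecLin_apply] at hx ⊢
    rw [pow_succ, ← Matrix.mulVec_mulVec, hx, Matrix.mulVec_zero]

private lemma det_conj (B : Matrix (Fin N) (Fin N) ℝ) (P : (Matrix (Fin N) (Fin N) ℝ)ˣ)
    (s : ℝ) :
    (s • (1 : Matrix (Fin N) (Fin N) ℝ) - conjBy B P).det =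
      (s • (1 : Matrix (Fin N) (Fin N) ℝ) - B).det := by
  have h : s • (1 : Matrix (Fin N) (Fin N) ℝ) - conjBy B P =
      (↑(P⁻¹) : Matrix (Fin N) (Fin N) ℝ) * (s • (1 : Matrix (Fin N) (Fin N) ℝ) - B) *
        (↑P : Matrix (Fin N) (Fin N) ℝ) := by
    rw [Matrix.mul_sub, Matrix.sub_mul]
    congr 1
    rw [Matrix.mul_smul, mul_one, Matrix.smul_mul]
    congr 1
    rw [← Units.val_mul, inv_mul_cancel, Units.val_one]
  rw [h, Matrix.det_mul, Matrix.det_mul, mul_right_comm]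
  have h2 : (↑P⁻¹ : Matrix (Fin N) (Fin N) ℝ).det * (↑P : Matrix (Fin N) (Fin N) ℝ).det = 1 := by
    rw [← Matrix.det_mul, ← Units.val_mul, inv_mul_cancel, Units.val_one, Matrix.det_one]
  rw [h2, one_mul]

private lemma charpoly_lim {B C₀ : Matrix (Fin N) (Fin N) ℝ}
    {P : ℕ → (Matrix (Fin N) (Fin N) ℝ)ˣ}
    (h : Filter.Tendsto (fun j => conjBy B (P j)) Filter.atTop (nhds C₀)) :
    C₀.charpoly = B.charpoly := by
  apply Polynomial.funext
  intro s
  rw [eval_charpoly', eval_charpoly']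
  have hcont : Continuous fun M : Matrix (Fin N) (Fin N) ℝ =>
      (s • (1 : Matrix (Fin N) (Fin N) ℝ) - M).det :=
    Continuous.matrix_det (continuous_const.sub continuous_id)
  have hc := (hcont.tendsto C₀).comp h
  have hc' : Filter.Tendsto (fun _ : ℕ => (s • (1 : Matrix (Fin N) (Fin N) ℝ) - B).det)
      Filter.atTop (nhds ((s • (1 : Matrix (Fin N) (Fin N) ℝ) - C₀).det)) := by
    have : (fun j : ℕ => (s • (1 : Matrix (Fin N) (Fin N) ℝ) - conjBy B (P j)).det) =
        fun _ : ℕ => (s • (1 : Matrix (Fin N) (Fin N) ℝ) - B).det := by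
      funext j; exact det_conj B (P j) s
    rw [← this]
    exact hc
  exact tendsto_nhds_unique hc' tendsto_const_nhds

private lemma backward {B : Matrix (Fin N) (Fin N) ℝ} (hd : genKerDim B = kerDim B)
    {P : ℕ → (Matrix (Fin N) (Fin N) ℝ)ˣ} {C₀ : Matrix (Fin N) (Fin N) ℝ}
    (htend : Filter.Tendsto (fun j => conjBy B (P j)) Filter.atTop (nhds C₀))
    (hrank : C₀.rank < B.rank) : False := by
  have hcp : C₀.charpoly = B.charpoly := charpoly_lim htend
  have h1 : kerDim C₀ ≤ kerDim B := by
    calc kerDim C₀ ≤ genKerDim C₀ := kerDim_le_genKerDim C₀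
    _ = (C₀.charpoly).natTrailingDegree := genKerDim_eq_trailing C₀
    _ = (B.charpoly).natTrailingDegree := by rw [hcp]
    _ = genKerDim B := (genKerDim_eq_trailing B).symm
    _ = kerDim B := hd
  have h2 := rank_add_kerDim C₀
  have h3 := rank_add_kerDim B
  omega

end helpers2

section forward
open Module

private lemma exists_psi {m : ℕ} {B : Matrix (Fin (m+1)) (Fin (m+1)) ℝ}
    (hd : genKerDim B ≠ kerDim B) : ∃ ψ, ψ ᵥ* (B * B) = 0 ∧ ψ ᵥ* B ≠ 0 := by
  by_contra hcon
  push_neg at hcon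
  apply hd
  have hker : LinearMap.ker ((B * B)ᵀ.mulVecLin) = LinearMap.ker (Bᵀ.mulVecLin) := by
    apply le_antisymm
    · intro x hx
      rw [LinearMap.mem_ker, Matrix.mulVecLin_apply, Matrix.mulVec_transpose] at hx ⊢
      exact hcon x hx
    · intro x hx
      rw [LinearMap.mem_ker, Matrix.mulVecLin_apply, Matrix.mulVec_transpose] at hx ⊢
      rw [← Matrix.vecMul_vecMul, hx, Matrix.zero_vecMul]
  have tdim : ∀ M : Matrix (Fin (m+1)) (Fin (m+1)) ℝ,
      Module.finrank ℝ (LinearMap.ker Mᵀ.mulVecLin) =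
        Module.finrank ℝ (LinearMap.ker M.mulVecLin) := by
    intro M
    have h1 := LinearMap.finrank_range_add_finrank_ker Mᵀ.mulVecLin
    have h2 := LinearMap.finrank_range_add_finrank_ker M.mulVecLin
    have h3 : Mᵀ.rank = M.rank := Matrix.rank_transpose M
    rw [Matrix.rank, Matrix.rank] at h3
    simp only [Module.finrank_fin_fun] at h1 h2
    omega
  have hdim : Module.finrank ℝ (LinearMap.ker ((B * B).mulVecLin)) =
      Module.finrank ℝ (LinearMap.ker B.mulVecLin) := by
    rw [← tdim B, ← hker, tdim]
  have hle : LinearMap.ker B.mulVecLin ≤ LinearMap.ker ((B * B).mulVecLin) := by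
    intro x hx
    rw [LinearMap.mem_ker, Matrix.mulVecLin_apply] at hx ⊢
    rw [← Matrix.mulVec_mulVec, hx, Matrix.mulVec_zero]
  have heq := Submodule.eq_of_le_of_finrank_le hle (le_of_eq hdim)
  have heq2 : LinearMap.ker (B.mulVecLin ^ 1) = LinearMap.ker (B.mulVecLin ^ 2) := by
    rw [pow_one, ← mulVecLin_pow B 2, pow_two]
    exact heq
  have hstab := Module.End.ker_pow_constant heq2 m
  unfold genKerDim kerDim
  rw [mulVecLin_pow]
  have hp : B.mulVecLin ^ (m + 1) = B.mulVecLin ^ (1 + m) := by rw [pow_succ', pow_add, pow_one]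
  rw [hp, ← hstab, pow_one]
end forward

private lemma conjBy_mul {N : ℕ} (B : Matrix (Fin N) (Fin N) ℝ)
    (U V : (Matrix (Fin N) (Fin N) ℝ)ˣ) :
    conjBy B (U * V) = (↑(V⁻¹) : Matrix (Fin N) (Fin N) ℝ) * conjBy B U *
      (↑V : Matrix (Fin N) (Fin N) ℝ) := by
  unfold conjBy
  rw [_root_.mul_inv_rev, Units.val_mul, Units.val_mul]
  simp only [mul_assoc]

set_option maxHeartbeats 1000000 in
set_option synthInstance.maxHeartbeats 400000 in
private lemma forward_main {m : ℕ} {B : Matrix (Fin (m+1)) (Fin (m+1)) ℝ}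
    (hψex : ∃ ψ, ψ ᵥ* (B * B) = 0 ∧ ψ ᵥ* B ≠ 0) :
    ∃ (P : ℕ → (Matrix (Fin (m+1)) (Fin (m+1)) ℝ)ˣ) (C₀ : Matrix (Fin (m+1)) (Fin (m+1)) ℝ),
      (∃ R : ℝ, ∀ (j : ℕ) (i i' : Fin (m+1)), |conjBy B (P j) i i'| ≤ R) ∧
      Filter.Tendsto (fun j => conjBy B (P j)) Filter.atTop (nhds C₀) ∧
      C₀.rank < B.rank := by
  classical
  obtain ⟨ψ, hψ2, hψ1⟩ := hψex
  set φv : Fin (m+1) → ℝ := ψ ᵥ* B with hφv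
  let ℓ : (Fin (m+1) → ℝ) →ₗ[ℝ] ℝ :=
    { toFun := fun x => φv ⬝ᵥ x
      map_add' := fun x y => by simp [dotProduct_add]
      map_smul' := fun c x => by simp [dotProduct_smul] }
  have hℓapp : ∀ x, ℓ x = φv ⬝ᵥ x := fun _ => rfl
  have hrange : ∀ x, ℓ (B *ᵥ x) = 0 := by
    intro x
    rw [hℓapp, Matrix.dotProduct_mulVec, Matrix.vecMul_vecMul, hψ2, zero_dotProduct]
  have hkerB : ∀ x, B *ᵥ x = 0 → ℓ x = 0 := by
    intro x hx
    rw [hℓapp, hφv, ← Matrix.dotProduct_mulVec, hx, dotProduct_zero]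
  have hℓφv : ℓ φv ≠ 0 := fun h => hψ1 (dotProduct_self_eq_zero.mp h)
  set H := LinearMap.ker ℓ with hH
  have hmemH : ∀ x, x ∈ H ↔ ℓ x = 0 := fun x => LinearMap.mem_ker
  have hHrank : Module.finrank ℝ H = m := by
    have h1 := LinearMap.finrank_range_add_finrank_ker ℓ
    have hsur : LinearMap.range ℓ = ⊤ := by
      rw [LinearMap.range_eq_top]
      intro r
      exact ⟨(r / ℓ φv) • φv, by rw [_root_.map_smul, smul_eq_mul, div_mul_cancel₀ _ hℓφv]⟩
    rw [hsur, ← hH] at h1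
    simp only [Module.finrank_fin_fun, finrank_top, Module.finrank_self] at h1
    omega
  let bH : Module.Basis (Fin m) ℝ H := Module.finBasisOfFinrankEq ℝ H hHrank
  have hli : ∀ (c : ℝ), ∀ x ∈ H, c • φv + x = 0 → c = 0 := by
    intro c x hx h0
    have h := congrArg ℓ h0
    rw [map_add, _root_.map_smul, (hmemH x).mp hx, add_zero, map_zero, smul_eq_mul] at h
    exact (mul_eq_zero.mp h).resolve_right hℓφv
  have hsp : ∀ z, ∃ c : ℝ, z + c • φv ∈ H := by
    intro z
    refine ⟨-(ℓ z / ℓ φv), (hmemH _).mpr ?_⟩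
    rw [map_add, _root_.map_smul, smul_eq_mul]
    field_simp
    ring
  let b : Module.Basis (Fin (m+1)) ℝ (Fin (m+1) → ℝ) := Module.Basis.mkFinCons φv bH hli hsp
  have hb0 : b 0 = φv := by simp [b, Module.Basis.coe_mkFinCons]
  have hbH : ∀ i : Fin (m+1), i ≠ 0 → b i ∈ H := by
    intro i hi
    obtain ⟨j, rfl⟩ := Fin.eq_succ_of_ne_zero hi
    simpa [b, Module.Basis.coe_mkFinCons] using (bH j).2
  have hrepr0 : ∀ y ∈ H, b.repr y 0 = 0 := by
    intro y hy
    have hs := congrArg ℓ (b.sum_repr y)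
    rw [map_sum] at hs
    have hterm : ∀ i : Fin (m+1),
        ℓ (b.repr y i • b i) = if i = 0 then b.repr y 0 * ℓ φv else 0 := by
      intro i
      rw [_root_.map_smul, smul_eq_mul]
      by_cases hi : i = 0
      · subst hi; rw [hb0, if_pos rfl]
      · rw [if_neg hi, (hmemH _).mp (hbH i hi), mul_zero]
    rw [Finset.sum_congr rfl (fun i _ => hterm i), Finset.sum_ite_eq' Finset.univ (0 : Fin (m+1))]
      at hs
    simp only [Finset.mem_univ, if_true] at hs
    rw [(hmemH y).mp hy] at hs
    exact (mul_eq_zero.mp hs).resolve_right hℓφv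
  -- the conjugated matrix A
  let A : Matrix (Fin (m+1)) (Fin (m+1)) ℝ := Matrix.of fun i k => b.repr (B *ᵥ b k) i
  have hAapp : ∀ i k, A i k = b.repr (B *ᵥ b k) i := fun _ _ => rfl
  have hrow0 : ∀ k, A 0 k = 0 := fun k => hrepr0 _ ((hmemH _).mpr (hrange (b k)))
  -- the basis matrix Q
  let Q : Matrix (Fin (m+1)) (Fin (m+1)) ℝ := (Pi.basisFun ℝ (Fin (m+1))).toMatrix ⇑b
  have hQ : ∀ i k, Q i k = b k i := by
    intro i k
    simp [Q, Module.Basis.toMatrix_apply]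
  haveI : Invertible Q := (Pi.basisFun ℝ (Fin (m+1))).invertibleToMatrix b
  let Qu : (Matrix (Fin (m+1)) (Fin (m+1)) ℝ)ˣ := unitOfInvertible Q
  have hQu : (↑Qu : Matrix (Fin (m+1)) (Fin (m+1)) ℝ) = Q := rfl
  have hBQ : B * Q = Q * A := by
    ext i k
    rw [Matrix.mul_apply, Matrix.mul_apply]
    have hL : ∑ t, B i t * Q t k = (B *ᵥ b k) i := by
      simp [hQ, Matrix.mulVec, dotProduct]
    have hR : ∑ t, Q i t * A t k = (B *ᵥ b k) i := by
      have hs := b.sum_repr (B *ᵥ b k)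
      calc ∑ t, Q i t * A t k = ∑ t, b.repr (B *ᵥ b k) t * b t i := by
            refine Finset.sum_congr rfl fun t _ => ?_
            rw [hQ, hAapp]; ring
        _ = (∑ t, b.repr (B *ᵥ b k) t • b t) i := by
            rw [Finset.sum_apply]
            simp [smul_eq_mul]
        _ = (B *ᵥ b k) i := by rw [hs]
    rw [hL, hR]
  have hA : conjBy B Qu = A := by
    unfold conjBy
    calc (↑(Qu⁻¹) : Matrix (Fin (m+1)) (Fin (m+1)) ℝ) * B * ↑Qu
        = ↑(Qu⁻¹) * (B * Q) := by rw [hQu, mul_assoc]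
      _ = ↑(Qu⁻¹) * (Q * A) := by rw [hBQ]
      _ = (↑(Qu⁻¹) * ↑Qu) * A := by rw [hQu, mul_assoc]
      _ = A := by rw [← Units.val_mul, inv_mul_cancel, Units.val_one, one_mul]
  -- diagonal scalings
  let dv : ℕ → Fin (m+1) → ℝ := fun j i => if i = 0 then 1/((j:ℝ)+1) else 1
  have hdv0 : ∀ j i, dv j i ≠ 0 := by
    intro j i
    dsimp only [dv]
    split
    · positivity
    · exact one_ne_zero
  have hdinv : ∀ j, (Matrix.diagonal fun i => (dv j i)⁻¹) * Matrix.diagonal (dv j) = 1 := by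
    intro j
    rw [Matrix.diagonal_mul_diagonal]
    have h : (fun i => (dv j i)⁻¹ * dv j i) = fun _ => (1:ℝ) :=
      funext fun i => inv_mul_cancel₀ (hdv0 j i)
    rw [h, Matrix.diagonal_one]
  have hdinv' : ∀ j, Matrix.diagonal (dv j) * (Matrix.diagonal fun i => (dv j i)⁻¹) = 1 := by
    intro j
    rw [Matrix.diagonal_mul_diagonal]
    have h : (fun i => dv j i * (dv j i)⁻¹) = fun _ => (1:ℝ) :=
      funext fun i => mul_inv_cancel₀ (hdv0 j i)
    rw [h, Matrix.diagonal_one]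
  let Du : ℕ → (Matrix (Fin (m+1)) (Fin (m+1)) ℝ)ˣ := fun j =>
    ⟨Matrix.diagonal (dv j), Matrix.diagonal fun i => (dv j i)⁻¹, hdinv' j, hdinv j⟩
  let P : ℕ → (Matrix (Fin (m+1)) (Fin (m+1)) ℝ)ˣ := fun j => Qu * Du j
  have hstep : ∀ j, conjBy B (P j) =
      (Matrix.diagonal fun i => (dv j i)⁻¹) * A * Matrix.diagonal (dv j) := by
    intro j
    have h1 : (↑((Du j)⁻¹) : Matrix (Fin (m+1)) (Fin (m+1)) ℝ) =
        Matrix.diagonal fun i => (dv j i)⁻¹ := rfl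
    have h2 : (↑(Du j) : Matrix (Fin (m+1)) (Fin (m+1)) ℝ) = Matrix.diagonal (dv j) := rfl
    rw [show P j = Qu * Du j from rfl, conjBy_mul, hA, h1, h2]
  have hentry : ∀ j i k, conjBy B (P j) i k = (dv j i)⁻¹ * A i k * dv j k := by
    intro j i k
    rw [hstep j, Matrix.mul_diagonal, Matrix.diagonal_mul]
  have hsimp : ∀ j i k, conjBy B (P j) i k =
      if k = 0 then (1/((j:ℝ)+1)) * A i k else A i k := by
    intro j i k
    rw [hentry]
    rcases eq_or_ne i 0 with hi | hi
    · subst hi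
      simp [hrow0]
    · rcases eq_or_ne k 0 with hk | hk
      · subst hk
        rw [if_pos rfl, show dv j i = 1 from if_neg hi,
          show dv j (0 : Fin (m+1)) = 1/((j:ℝ)+1) from if_pos rfl]
        ring
      · simp [dv, hi, hk]
  -- the limit matrix
  let C₀ : Matrix (Fin (m+1)) (Fin (m+1)) ℝ := Matrix.of fun i k => if k = 0 then 0 else A i k
  have hC₀app : ∀ i k, C₀ i k = if k = 0 then 0 else A i k := fun _ _ => rfl
  clear_value C₀ P Du dv Qu Q A b bH H ℓ
  refine ⟨P, C₀, ⟨∑ p : Fin (m+1) × Fin (m+1), |A p.1 p.2|, ?_⟩, ?_, ?_⟩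
  · -- uniform bound
    intro j i k
    rw [hsimp]
    have hle : |A i k| ≤ ∑ p : Fin (m+1) × Fin (m+1), |A p.1 p.2| :=
      Finset.single_le_sum (f := fun p : Fin (m+1) × Fin (m+1) => |A p.1 p.2|)
        (fun p _ => abs_nonneg _) (Finset.mem_univ (i, k))
    split
    · refine le_trans ?_ hle
      rw [abs_mul]
      have h1 : |1/((j:ℝ)+1)| ≤ 1 := by
        rw [abs_of_pos (by positivity), div_le_one (by positivity)]
        linarith [Nat.cast_nonneg (α := ℝ) j]
      nlinarith [abs_nonneg (A i k)]
    · exact hle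
  · -- convergence
    have hfun : ∀ j : ℕ, conjBy B (P j) =
        Matrix.of fun i k => if k = 0 then (1/((j:ℝ)+1)) * A i k else A i k := by
      intro j
      ext i k
      rw [hsimp]
      rfl
    simp only [hfun]
    refine tendsto_pi_nhds.mpr ?_
    intro i
    rw [tendsto_pi_nhds]
    intro k
    rcases eq_or_ne k 0 with hk | hk
    · subst hk
      simp only [Matrix.of_apply, if_pos rfl, if_true]
      have h := tendsto_one_div_add_atTop_nhds_zero_nat.mul_const (A i 0)
      rw [zero_mul] at h
      rw [show C₀ i 0 = (0 : ℝ) from (hC₀app i 0).trans (if_pos rfl)]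
      convert h using 2 with j
    · simp only [Matrix.of_apply, if_neg hk]
      rw [show C₀ i k = A i k from (hC₀app i k).trans (if_neg hk)]
      exact tendsto_const_nhds
  · -- rank drop
    set g : Fin (m+1) → ℝ := fun k => if k = 0 then (0:ℝ) else 1 with hg
    have hC0E : C₀ = A * Matrix.diagonal g := by
      ext i k
      rw [Matrix.mul_diagonal, hC₀app]
      by_cases hk : k = 0
      · subst hk; rw [if_pos rfl, show g 0 = 0 from if_pos rfl, mul_zero]
      · rw [if_neg hk, show g k = 1 from if_neg hk, mul_one]
    have hAeq : A = (↑(Qu⁻¹) : Matrix (Fin (m+1)) (Fin (m+1)) ℝ) * B * Q := by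
      rw [← hA, ← hQu]; rfl
    have hC0eq : C₀ = (↑(Qu⁻¹) : Matrix (Fin (m+1)) (Fin (m+1)) ℝ) *
        (B * (Q * Matrix.diagonal g)) := by
      rw [hC0E, hAeq]
      simp only [mul_assoc]
    have hr1 : C₀.rank = (B * (Q * Matrix.diagonal g)).rank := by
      rw [hC0eq]
      exact Matrix.rank_mul_eq_right_of_isUnit_det _ _ (Matrix.isUnits_det_units (Qu⁻¹))
    -- the range of (Q * diagonal g) is H
    have hrangeQE : LinearMap.range (Q * Matrix.diagonal g).mulVecLin = H := by
      rw [Matrix.range_mulVecLin]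
      have hcols : (Q * Matrix.diagonal g)ᵀ = fun k => g k • b k := by
        ext k i
        rw [Matrix.transpose_apply, Matrix.mul_diagonal, hQ]
        simp [mul_comm]
      rw [show (Q * Matrix.diagonal g).col = fun k => g k • b k from hcols]
      apply le_antisymm
      · rw [Submodule.span_le]
        rintro _ ⟨t, rfl⟩
        dsimp only
        by_cases ht : t = 0
        · subst ht
          rw [show g 0 = 0 from if_pos rfl, zero_smul]
          exact Submodule.zero_mem H
        · rw [show g t = 1 from if_neg ht, one_smul]
          exact hbH t ht
      · intro y hy
        rw [← b.sum_repr y]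
        apply Submodule.sum_mem
        intro t _
        by_cases ht : t = 0
        · subst ht
          rw [hrepr0 y hy, zero_smul]
          exact Submodule.zero_mem _
        · apply Submodule.smul_mem
          apply Submodule.subset_span
          exact ⟨t, by dsimp only; rw [show g t = 1 from if_neg ht, one_smul]⟩
    have hr2 : (B * (Q * Matrix.diagonal g)).rank =
        Module.finrank ℝ (Submodule.map B.mulVecLin H) := by
      rw [Matrix.rank, Matrix.mulVecLin_mul, LinearMap.range_comp, hrangeQE]
    have hker_le_H : LinearMap.ker B.mulVecLin ≤ H := by
      intro x hx
      rw [LinearMap.mem_ker, Matrix.mulVecLin_apply] at hx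
      exact (hmemH x).mpr (hkerB x hx)
    have hrn : Module.finrank ℝ (Submodule.map B.mulVecLin H) + kerDim B = m := by
      have h1 := LinearMap.finrank_range_add_finrank_ker (B.mulVecLin.comp H.subtype)
      rw [LinearMap.range_comp, Submodule.range_subtype, LinearMap.ker_comp] at h1
      have h3 : Module.finrank ℝ (Submodule.comap H.subtype (LinearMap.ker B.mulVecLin)) =
          kerDim B := (Submodule.comapSubtypeEquivOfLe hker_le_H).finrank_eq
      rw [h3, hHrank] at h1
      exact h1
    have hrB := rank_add_kerDim B
    rw [hr1, hr2]
    omega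



/-- `d ≠ d'` (i.e. the Jordan form of `B` has a nontrivial nilpotent block) iff there is a
sequence of conjugates `C_j = P_j⁻¹ B P_j`, uniformly bounded in norm, converging to a matrix
`C₀` with `rank C₀ < rank B`. -/
theorem stmt8 {n : ℕ} (B : Matrix (Fin n) (Fin n) ℝ) :
    genKerDim B ≠ kerDim B ↔
      ∃ (P : ℕ → (Matrix (Fin n) (Fin n) ℝ)ˣ) (C₀ : Matrix (Fin n) (Fin n) ℝ),
        (∃ R : ℝ, ∀ (j : ℕ) (i i' : Fin n), |conjBy B (P j) i i'| ≤ R) ∧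
        Filter.Tendsto (fun j => conjBy B (P j)) Filter.atTop (nhds C₀) ∧
        C₀.rank < B.rank := by
  cases n with
  | zero =>
    constructor
    · intro hd
      exfalso
      apply hd
      unfold genKerDim kerDim
      have h1 := Submodule.finrank_le (LinearMap.ker (B ^ 0).mulVecLin)
      have h2 := Submodule.finrank_le (LinearMap.ker B.mulVecLin)
      simp only [Module.finrank_fin_fun] at h1 h2
      omega
    · rintro ⟨P, C₀, -, -, hrank⟩
      exfalso
      have hB := Matrix.rank_le_card_width B
      simp only [Fintype.card_fin] at hB
      omega
  | succ m =>
    constructor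
    · intro hd
      exact forward_main (exists_psi hd)
    · rintro ⟨P, C₀, -, htend, hrank⟩ hd
      exact backward hd htend hrank
end

section
/- There exist a real number λ ≠ 0 and an invertible matrix Q ∈ GL₄(ℝ) such that Q⁻¹AQ is the matrix with rows (e^λ, 1, 0, 0), (0, e^λ, 0, 0), (0, 0, e^{−λ}, 1), (0, 0, 0, e^{−λ}). -/
set_option maxHeartbeats 2000000

open Matrix

noncomputable def sq5 : ℝ := Real.sqrt 5

lemma sq5_sq : sq5 * sq5 = 5 := Real.mul_self_sqrt (by norm_num)

lemma sq5_pos : (0:ℝ) < sq5 := Real.sqrt_pos.2 (by norm_num)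

noncomputable def Qmat : Matrix (Fin 4) (Fin 4) ℝ :=
  !![2, sq5 - 1, 2, -sq5 - 1;
     sq5 - 1, 0, -sq5 - 1, 0;
     0, 2*sq5, 0, -(2*sq5);
     0, 5 - sq5, 0, 5 + sq5]

noncomputable def Qinv : Matrix (Fin 4) (Fin 4) ℝ :=
  !![(25 + 5*sq5)/100, 10*sq5/100, (-10 - 2*sq5)/100, (5 + sq5)/100;
     0, 0, (5 + 5*sq5)/100, 10/100;
     (25 - 5*sq5)/100, -10*sq5/100, (-10 + 2*sq5)/100, (5 - sq5)/100;
     0, 0, (5 - 5*sq5)/100, 10/100]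

lemma QQinv : Qmat * Qinv = 1 := by
  have h5 := sq5_sq
  rw [Qmat, Qinv]
  ext i j
  fin_cases i <;> fin_cases j <;>
    simp [Matrix.mul_apply, Fin.sum_univ_four, Matrix.one_apply, Matrix.vecHead, Matrix.vecTail] <;> nlinarith [h5]

lemma QinvQ : Qinv * Qmat = 1 := by
  have h5 := sq5_sq
  rw [Qmat, Qinv]
  ext i j
  fin_cases i <;> fin_cases j <;>
    simp [Matrix.mul_apply, Fin.sum_univ_four, Matrix.one_apply, Matrix.vecHead, Matrix.vecTail] <;> nlinarith [h5]

noncomputable def Qu : (Matrix (Fin 4) (Fin 4) ℝ)ˣ := ⟨Qmat, Qinv, QQinv, QinvQ⟩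

/-- The matrix `A = [[A', A''],[0, A']]` with `A' = [[2,1],[1,1]]`, `A'' = [[0,1],[0,0]]`,
viewed as a real matrix, is conjugate over `GL₄(ℝ)` to the Jordan-type matrix
`[[e^λ,1,0,0],[0,e^λ,0,0],[0,0,e^{−λ},1],[0,0,0,e^{−λ}]]` for some real `λ ≠ 0`. -/
theorem stmt12 :
    ∃ l : ℝ, l ≠ 0 ∧
      ∃ Q : (Matrix (Fin 4) (Fin 4) ℝ)ˣ,
        (↑Q⁻¹ : Matrix (Fin 4) (Fin 4) ℝ) *
            !![(2 : ℝ), 1, 0, 1; 1, 1, 0, 0; 0, 0, 2, 1; 0, 0, 1, 1] *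
            (↑Q : Matrix (Fin 4) (Fin 4) ℝ) =
          !![Real.exp l, 1, 0, 0;
             0, Real.exp l, 0, 0;
             0, 0, Real.exp (-l), 1;
             0, 0, 0, Real.exp (-l)] := by
  have h5 := sq5_sq
  have hs : (2:ℝ) < sq5 := by nlinarith [sq5_pos]
  have hpos : (0:ℝ) < (3 + sq5)/2 := by linarith
  refine ⟨Real.log ((3 + sq5)/2), ?_, Qu, ?_⟩
  · have h1 : (1:ℝ) < (3 + sq5)/2 := by linarith
    have := Real.log_pos h1
    linarith
  · have he : Real.exp (Real.log ((3 + sq5)/2)) = (3 + sq5)/2 := Real.exp_log hpos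
    have hen : Real.exp (-(Real.log ((3 + sq5)/2))) = (3 - sq5)/2 := by
      rw [Real.exp_neg, he]
      exact inv_eq_of_mul_eq_one_right (by nlinarith [h5])
    rw [he, hen]
    show Qinv * _ * Qmat = _
    rw [Qinv, Qmat]
    ext i j
    fin_cases i <;> fin_cases j <;>
      simp [Matrix.mul_apply, Fin.sum_univ_four, Matrix.vecHead, Matrix.vecTail] <;> nlinarith [h5]
end
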